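/- For every nonnegative integer n and real parameters α, β > -1, the shifted Jacobi polynomial R_n^{(α,β)}(x) expands in Hermite polynomials as R_n^{(α,β)}(x) = Σ_{j=0}^{n} C_{n,j} H_j(x), where C_{n,j} = ((-1)^n (-1)^j (β+1)_n (n+α+β+1)_j / ((n-j)! 2^j j! (β+1)_j)) · Σ_{s=0}^{⌊(n-j)/2⌋} [((j-n)/2)_s ((j+1-n)/2)_s ((j+n+α+β+1)/2)_s ((j+n+α+β+2)/2)_s / (((j+β+1)/2)_s ((j+β+2)/2)_s)] · 1/s!. -/

import Mathlib

/-!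
Inverting the explicit Hermite series gives `x ^ m = ∑ₖ m! / (2 ^ m k! (m - 2k)!) H_{m-2k}(x)`;
the double sum collapses by the binomial identity `∑_{k ≤ r} (-1)^(r-k) / (k! (r-k)!) = δ_{r0}`.
Substituting this into the power series of `R_n^{(α,β)}`, the coefficient of `H_j` collects the
monomials `x^(j+2k)`, and the duplication formula
`(a)_{j+2k} = (a)_j 4^k ((a+j)/2)_k ((a+j+1)/2)_k` turns each contribution into the `k`-th term
of the `₄F₂` series.
-/

open Finset

/-- Pochhammer (rising factorial) symbol on the reals. -/
noncomputable def poch (a : ℝ) (n : ℕ) : ℝ := ∏ i ∈ Finset.range n, (a + i)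

/-- Physicists' Hermite polynomial. -/
noncomputable def hermiteP (N : ℕ) (x : ℝ) : ℝ :=
  (N.factorial : ℝ) * ∑ k ∈ Finset.range (N / 2 + 1),
    (-1 : ℝ) ^ k * (2 * x) ^ (N - 2 * k) / ((k.factorial : ℝ) * ((N - 2 * k).factorial : ℝ))

/-- Shifted Jacobi polynomial. -/
noncomputable def shiftedJacobi (α β : ℝ) (n : ℕ) (x : ℝ) : ℝ :=
  ((-1 : ℝ) ^ n * poch (β + 1) n / (n.factorial : ℝ)) *
    ∑ s ∈ Finset.range (n + 1),
      poch (-(n : ℝ)) s * poch ((n : ℝ) + α + β + 1) s * x ^ s /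
        (poch (β + 1) s * (s.factorial : ℝ))

open Nat

lemma poch_succ (a : ℝ) (n : ℕ) : poch a (n + 1) = poch a n * (a + n) :=
  prod_range_succ _ _

lemma poch_add (a : ℝ) (m k : ℕ) : poch a (m + k) = poch a m * poch (a + m) k := by
  simp only [poch, prod_range_add, Nat.cast_add, add_assoc]

lemma poch_two_mul (a : ℝ) (k : ℕ) :
    poch a (2 * k) = 4 ^ k * poch (a / 2) k * poch ((a + 1) / 2) k := by
  induction k with
  | zero => simp [poch]
  | succ k ih =>
    rw [show 2 * (k + 1) = 2 * k + 1 + 1 by ring, poch_succ, poch_succ, ih, poch_succ, poch_succ]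
    push_cast
    ring

lemma poch_neg_natCast {n j : ℕ} (hj : j ≤ n) :
    poch (-n) j = (-1) ^ j * n ! / (n - j)! := by
  have hdesc : poch (-n) j = (-1) ^ j * (n.descFactorial j : ℝ) := by
    rw [descFactorial_eq_prod_range, Nat.cast_prod, pow_eq_prod_const, ← prod_mul_distrib]
    refine prod_congr rfl fun i hi => ?_
    rw [Nat.cast_sub (by grind)]
    ring
  rw [hdesc, ← factorial_mul_descFactorial hj]
  push_cast
  field_simp

lemma sum_range_neg_one_pow_div_factorial_mul_factorial (r : ℕ) :
    ∑ k ∈ range (r + 1), (-1 : ℝ) ^ (r - k) / (k ! * (r - k)!) = if r = 0 then 1 else 0 := by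
  have hbinom := add_pow (1 : ℝ) (-1) r
  simp only [one_pow, one_mul, add_neg_cancel, zero_pow_eq] at hbinom
  have hchoose : ∀ k ∈ range (r + 1), (-1 : ℝ) ^ (r - k) / (k ! * (r - k)!) =
      (-1) ^ (r - k) * r.choose k / r ! := fun k hk => by
    rw [cast_choose ℝ (by grind)]
    field_simp
  rw [sum_congr rfl hchoose, ← sum_div, ← hbinom]
  split_ifs with hr <;> simp [hr]

lemma pow_eq_sum_hermiteP (m : ℕ) (x : ℝ) :
    x ^ m =
      ∑ k ∈ range (m / 2 + 1), m ! / (2 ^ m * (k ! * (m - 2 * k)!)) * hermiteP (m - 2 * k) x := by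
  set g : ℕ → ℕ → ℝ := fun k l =>
    m ! / 2 ^ m * ((-1) ^ l * (2 * x) ^ (m - 2 * (k + l)) / (k ! * l ! * (m - 2 * (k + l))!))
  have hexpand : ∀ k ∈ range (m / 2 + 1),
      m ! / (2 ^ m * (k ! * (m - 2 * k)!)) * hermiteP (m - 2 * k) x =
        ∑ l ∈ range (m / 2 + 1 - k), g k l := fun k hk => by
    rw [hermiteP, show (m - 2 * k) / 2 + 1 = m / 2 + 1 - k by grind, mul_sum, mul_sum]
    refine sum_congr rfl fun l _ => ?_
    rw [show m - 2 * k - 2 * l = m - 2 * (k + l) by omega]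
    simp only [g]
    field_simp
  have hcollapse : ∀ r ∈ range (m / 2 + 1), ∑ k ∈ range (r + 1), g k (r - k) =
      (if r = 0 then 1 else 0) * (m ! / 2 ^ m * ((2 * x) ^ (m - 2 * r) / (m - 2 * r)!)) := by
    intro r _
    rw [← sum_range_neg_one_pow_div_factorial_mul_factorial, sum_mul]
    refine sum_congr rfl fun k hk => ?_
    simp only [g, show k + (r - k) = r by grind]
    ring
  rw [sum_congr rfl hexpand, ← sum_range_diag_flip, sum_congr rfl hcollapse]
  simp only [ite_mul, one_mul, zero_mul, sum_ite_eq', mem_range, Nat.zero_lt_succ, if_true,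
    mul_zero, Nat.sub_zero, mul_pow]
  field_simp

lemma sum_range_sum_range_div_two {M : Type*} [AddCommMonoid M] (n : ℕ) (f : ℕ → ℕ → M) :
    ∑ s ∈ range (n + 1), ∑ k ∈ range (s / 2 + 1), f s k =
      ∑ j ∈ range (n + 1), ∑ k ∈ range ((n - j) / 2 + 1), f (j + 2 * k) k := by
  rw [sum_sigma', sum_sigma']
  refine sum_nbij' (fun p => ⟨p.1 - 2 * p.2, p.2⟩) (fun p => ⟨p.1 + 2 * p.2, p.2⟩) ?_ ?_ ?_ ?_ ?_ <;>
    simp only [mem_sigma, mem_range, Sigma.forall, Sigma.mk.injEq, heq_eq_eq] <;> grind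

lemma jacobi_hermite_coeff_eq_hypergeometric_term (α β : ℝ) (n j k : ℕ) (h : j + 2 * k ≤ n) :
    ((-1) ^ n * poch (β + 1) n / n !) *
      (poch (-n) (j + 2 * k) * poch (n + α + β + 1) (j + 2 * k) *
        ((j + 2 * k)! / (2 ^ (j + 2 * k) * (k ! * j !))) / (poch (β + 1) (j + 2 * k) * (j + 2 * k)!))
    = ((-1) ^ n * (-1) ^ j * poch (β + 1) n * poch (n + α + β + 1) j /
        ((n - j)! * 2 ^ j * j ! * poch (β + 1) j)) *
      ((poch ((j - n) / 2) k * poch ((j + 1 - n) / 2) k * poch ((j + n + α + β + 1) / 2) k *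
          poch ((j + n + α + β + 2) / 2) k /
        (poch ((j + β + 1) / 2) k * poch ((j + β + 2) / 2) k)) * 1 / k !) := by
  rw [poch_add (-n) j, poch_add (n + α + β + 1) j, poch_add (β + 1) j, poch_two_mul (-n + j),
    poch_two_mul (n + α + β + 1 + j), poch_two_mul (β + 1 + j), poch_neg_natCast (by omega),
    pow_add, pow_mul]
  field_simp
  -- `ring_nf` also normalises the arguments of `poch`, e.g. `(-n + j) / 2` to `(j - n) / 2`.
  ring_nf

theorem shiftedJacobi_in_hermite_general (α β : ℝ) (n : ℕ) (x : ℝ) :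
    shiftedJacobi α β n x =
      ∑ j ∈ Finset.range (n + 1),
        ((-1 : ℝ) ^ n * (-1 : ℝ) ^ j * poch (β + 1) n * poch ((n : ℝ) + α + β + 1) j /
          (((n - j).factorial : ℝ) * 2 ^ j * (j.factorial : ℝ) * poch (β + 1) j)) *
          (∑ s ∈ Finset.range ((n - j) / 2 + 1),
            (poch (((j : ℝ) - n) / 2) s * poch (((j : ℝ) + 1 - n) / 2) s *
              poch (((j : ℝ) + n + α + β + 1) / 2) s * poch (((j : ℝ) + n + α + β + 2) / 2) s /
              (poch (((j : ℝ) + β + 1) / 2) s * poch (((j : ℝ) + β + 2) / 2) s)) *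
            (1 : ℝ) / (s.factorial : ℝ)) *
          hermiteP j x := by
  conv_lhs =>
    rw [shiftedJacobi, mul_sum]
    enter [2, s]
    rw [pow_eq_sum_hermiteP s x, mul_sum, sum_div, mul_sum]
  rw [sum_range_sum_range_div_two]
  refine sum_congr rfl fun j hj => ?_
  rw [mul_sum, sum_mul]
  refine sum_congr rfl fun k hk => ?_
  rw [Nat.add_sub_cancel]
  linear_combination hermiteP j x * jacobi_hermite_coeff_eq_hypergeometric_term α β n j k
    (by grind)

/-- Connection formula for shifted Jacobi polynomials in series of Hermite polynomials. -/
theorem shiftedJacobi_in_hermite (α β : ℝ) (hα : α > -1) (hβ : β > -1) (n : ℕ) (x : ℝ) :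
    shiftedJacobi α β n x =
      ∑ j ∈ Finset.range (n + 1),
        ((-1 : ℝ) ^ n * (-1 : ℝ) ^ j * poch (β + 1) n * poch ((n : ℝ) + α + β + 1) j /
          (((n - j).factorial : ℝ) * 2 ^ j * (j.factorial : ℝ) * poch (β + 1) j)) *
          (∑ s ∈ Finset.range ((n - j) / 2 + 1),
            (poch (((j : ℝ) - n) / 2) s * poch (((j : ℝ) + 1 - n) / 2) s *
              poch (((j : ℝ) + n + α + β + 1) / 2) s * poch (((j : ℝ) + n + α + β + 2) / 2) s /
              (poch (((j : ℝ) + β + 1) / 2) s * poch (((j : ℝ) + β + 2) / 2) s)) *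
            (1 : ℝ) / (s.factorial : ℝ)) *
          hermiteP j x :=
  shiftedJacobi_in_hermite_general α β n x
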